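/- arXiv:math/0407218 — 2 statements merged into one kernel-verified Lean document; each statement's English description precedes it below -/
import Mathlib

section
/- In H_{n,r}(q), for every 1 ≤ i ≤ n−1 and every color word c ∈ C^n one has: T_i L_c = L_{cσ_i} T_i + (q−1) L_c if c_i < c_{i+1}; T_i L_c = L_c T_i if c_i = c_{i+1}; and T_i L_c = L_{cσ_i} T_i − (q−1) L_{cσ_i} if c_i > c_{i+1}. Here cσ_i denotes the word obtained from c by exchanging c_i and c_{i+1}. -/
noncomputable section

open Polynomial

namespace AKS0

/-- Generators: `Sum.inl i` is `T_{i+1}` (0-indexed `T_i`, acting on positions `i, i+1`),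
`Sum.inr j` is `ξ_{j+1}` (0-indexed `ξ_j`). -/
abbrev Gen (n : ℕ) : Type := Fin (n - 1) ⊕ Fin n

abbrev FreeAKS (n : ℕ) : Type := FreeAlgebra ℂ (Gen n)

def tGen (n : ℕ) (i : Fin (n - 1)) : FreeAKS n := FreeAlgebra.ι ℂ (Sum.inl i)

def xGen (n : ℕ) (j : Fin n) : FreeAKS n := FreeAlgebra.ι ℂ (Sum.inr j)

/-- The position `i` of `Fin (n-1)`, viewed in `Fin n`. -/
def idx0 (n : ℕ) (i : Fin (n - 1)) : Fin n := ⟨i.1, by have := i.2; omega⟩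

/-- The position `i+1` of `Fin n`, for `i : Fin (n-1)`. -/
def idx1 (n : ℕ) (i : Fin (n - 1)) : Fin n := ⟨i.1 + 1, by have := i.2; omega⟩

/-- The Lagrange polynomial `P_k(X) = ∏_{l ≠ k} (X - u_l)/(u_k - u_l)`. -/
def lagPoly (r : ℕ) (u : Fin r → ℂ) (k : Fin r) : ℂ[X] :=
  ∏ l ∈ Finset.univ.erase k, (C ((u k - u l)⁻¹) * (X - C (u l)))

/-- The defining relations of the Ariki-Koike-Shoji algebra `H_{n,r}(q)`. -/
inductive Rel (n r : ℕ) (u : Fin r → ℂ) (q : ℂ) : FreeAKS n → FreeAKS n → Prop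
  | quad (i : Fin (n - 1)) :
      Rel n r u q ((tGen n i - algebraMap ℂ (FreeAKS n) q) * (tGen n i + 1)) 0
  | braid (i j : Fin (n - 1)) (h : (j : ℕ) = (i : ℕ) + 1) :
      Rel n r u q (tGen n i * tGen n j * tGen n i) (tGen n j * tGen n i * tGen n j)
  | commTT (i j : Fin (n - 1)) (h : (i : ℕ) + 2 ≤ (j : ℕ) ∨ (j : ℕ) + 2 ≤ (i : ℕ)) :
      Rel n r u q (tGen n i * tGen n j) (tGen n j * tGen n i)
  | xPoly (j : Fin n) :
      Rel n r u q (Polynomial.aeval (xGen n j) (∏ l : Fin r, (X - C (u l)))) 0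
  | commXX (i j : Fin n) :
      Rel n r u q (xGen n i * xGen n j) (xGen n j * xGen n i)
  | cross (i : Fin (n - 1)) :
      Rel n r u q (tGen n i * xGen n (idx0 n i))
        (xGen n (idx1 n i) * tGen n i -
          (q - 1) • ∑ p ∈ Finset.univ.filter (fun p : Fin r × Fin r => p.1 < p.2),
            (u p.2 - u p.1) •
              (Polynomial.aeval (xGen n (idx0 n i)) (lagPoly r u p.1) *
                Polynomial.aeval (xGen n (idx1 n i)) (lagPoly r u p.2)))
  | sumComm (i : Fin (n - 1)) :
      Rel n r u q (tGen n i * (xGen n (idx1 n i) + xGen n (idx0 n i)))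
        ((xGen n (idx1 n i) + xGen n (idx0 n i)) * tGen n i)
  | commTX (i : Fin (n - 1)) (j : Fin n) (h : j ≠ idx0 n i) (h' : j ≠ idx1 n i) :
      Rel n r u q (tGen n i * xGen n j) (xGen n j * tGen n i)

/-- The Ariki-Koike-Shoji algebra `H_{n,r}(q)` (Shoji's presentation, normalized). -/
abbrev AKSAlg (n r : ℕ) (u : Fin r → ℂ) (q : ℂ) : Type := RingQuot (Rel n r u q)

/-- The generator `T_i` in `H_{n,r}(q)`. -/
def Ti (n r : ℕ) (u : Fin r → ℂ) (q : ℂ) (i : Fin (n - 1)) : AKSAlg n r u q :=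
  RingQuot.mkAlgHom ℂ (Rel n r u q) (tGen n i)

/-- The generator `ξ_j` in `H_{n,r}(q)`. -/
def Xi (n r : ℕ) (u : Fin r → ℂ) (q : ℂ) (j : Fin n) : AKSAlg n r u q :=
  RingQuot.mkAlgHom ℂ (Rel n r u q) (xGen n j)

/-- `L_c = P_{c_1}(ξ_1) ⋯ P_{c_n}(ξ_n)`. -/
def Lc (n r : ℕ) (u : Fin r → ℂ) (q : ℂ) (c : Fin n → Fin r) : AKSAlg n r u q :=
  (List.ofFn fun j : Fin n => Polynomial.aeval (Xi n r u q j) (lagPoly r u (c j))).prod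

end AKS0

namespace AKS0

/-- The color word `cσ_i`, obtained from `c` by exchanging `c_i` and `c_{i+1}`. -/
def swapWord (n r : ℕ) (c : Fin n → Fin r) (i : Fin (n - 1)) : Fin n → Fin r :=
  c ∘ Equiv.swap (idx0 n i) (idx1 n i)

/-!
Put `E_{ab} = P_a(ξ_i) P_b(ξ_{i+1})`. Since every `ξ_j` is killed by `∏_l (X - u_l)` with the
`u_l` distinct, the `E_{ab}` are orthogonal idempotents summing to `1`, and `ξ_i`, `ξ_{i+1}` act
on `E_{ab}` (from either side) by the scalars `u_a`, `u_b`. The cross relation and the symmetry of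
`ξ_i + ξ_{i+1}` give `T_i ξ_i = ξ_{i+1} T_i - (q-1) S` and `T_i ξ_{i+1} = ξ_i T_i + (q-1) S`, where
`S E_{ab} = [a < b] (u_b - u_a) E_{ab}`. Sandwiching both between `E_{cd}` and `E_{ab}` gives
`(u_d - u_a) E_{cd} T_i E_{ab} = (u_b - u_c) E_{cd} T_i E_{ab} = (q-1) [a < b] (u_b - u_a) E_{cd} E_{ab}`,
so `E_{cd} T_i E_{ab}` vanishes unless `(c, d)` is `(a, b)` or `(b, a)`, and
`E_{ab} T_i E_{ab} = [a < b] (q-1) E_{ab}` for `a ≠ b`. Expanding `T_i E_{ab}` and `E_{ba} T_i`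
along `1 = ∑ E_{cd}` yields `T_i E_{ab} = E_{ba} T_i + (q-1) ([a < b] E_{ab} - [b < a] E_{ba})`.
Finally `L_c` is `E_{c_i c_{i+1}}` times a product of factors commuting with `T_i`.
-/

theorem _root_.Commute.aeval_right {R A : Type*} [CommSemiring R] [Semiring A] [Algebra R A]
    {x y : A} (h : Commute x y) (p : R[X]) : Commute x (aeval y p) := by
  rw [aeval_eq_sum_range]
  exact Commute.sum_right _ _ _ fun k _ => (h.pow_right k).smul_right _

section LagrangeIdempotents

variable {r : ℕ} {u : Fin r → ℂ}

lemma lagPoly_eq_C_mul_prod (k : Fin r) :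
    lagPoly r u k = C (∏ l ∈ Finset.univ.erase k, (u k - u l)⁻¹) *
      ∏ l ∈ Finset.univ.erase k, (X - C (u l)) := by
  rw [lagPoly, Finset.prod_mul_distrib, map_prod]

lemma X_sub_C_mul_lagPoly (k : Fin r) :
    (X - C (u k)) * lagPoly r u k =
      C (∏ l ∈ Finset.univ.erase k, (u k - u l)⁻¹) * ∏ l : Fin r, (X - C (u l)) := by
  rw [lagPoly_eq_C_mul_prod, ← Finset.mul_prod_erase Finset.univ _ (Finset.mem_univ k)]
  ring

lemma prod_X_sub_C_dvd_lagPoly_mul {k l : Fin r} (hkl : k ≠ l) :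
    (∏ m : Fin r, (X - C (u m))) ∣ lagPoly r u k * lagPoly r u l := by
  have hk : X - C (u k) ∣ lagPoly r u l := by
    rw [lagPoly_eq_C_mul_prod]
    exact dvd_mul_of_dvd_right (Finset.dvd_prod_of_mem _ (by simp [hkl])) _
  rw [lagPoly_eq_C_mul_prod k, mul_assoc, ← Finset.prod_erase_mul _ _ (Finset.mem_univ k)]
  exact dvd_mul_of_dvd_right (mul_dvd_mul_left _ hk) _

variable {A : Type*} [Ring A] [Algebra ℂ A] {x : A}

lemma mul_aeval_lagPoly (hx : aeval x (∏ l : Fin r, (X - C (u l))) = 0) (k : Fin r) :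
    x * aeval x (lagPoly r u k) = u k • aeval x (lagPoly r u k) := by
  have h := congrArg (aeval x) (X_sub_C_mul_lagPoly (u := u) k)
  rw [map_mul, map_mul, hx, mul_zero, map_sub, aeval_X, aeval_C, sub_mul, sub_eq_zero] at h
  rw [h, Algebra.smul_def]

lemma aeval_lagPoly_mul_aeval_lagPoly_of_ne (hx : aeval x (∏ l : Fin r, (X - C (u l))) = 0)
    {k l : Fin r} (hkl : k ≠ l) : aeval x (lagPoly r u k) * aeval x (lagPoly r u l) = 0 := by
  obtain ⟨p, hp⟩ := prod_X_sub_C_dvd_lagPoly_mul (u := u) hkl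
  rw [← map_mul, hp, map_mul, hx, zero_mul]

lemma sum_aeval_lagPoly (hu : Function.Injective u)
    (hx : aeval x (∏ l : Fin r, (X - C (u l))) = 0) : ∑ k, aeval x (lagPoly r u k) = 1 := by
  rcases isEmpty_or_nonempty (Fin r) with hr | ⟨⟨k⟩⟩
  · rw [Finset.univ_eq_empty, Finset.prod_empty, map_one] at hx
    rw [Finset.univ_eq_empty, Finset.sum_empty, hx]
  · rw [← map_sum, show ∑ k, lagPoly r u k = 1 from
      Lagrange.sum_basis hu.injOn ⟨k, Finset.mem_univ _⟩, map_one]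

lemma aeval_lagPoly_mul_aeval_lagPoly (hu : Function.Injective u)
    (hx : aeval x (∏ l : Fin r, (X - C (u l))) = 0) (k l : Fin r) :
    aeval x (lagPoly r u k) * aeval x (lagPoly r u l) =
      if k = l then aeval x (lagPoly r u k) else 0 := by
  split_ifs with hkl
  · subst hkl
    calc _ = aeval x (lagPoly r u k) * ∑ m, aeval x (lagPoly r u m) := by
          rw [Finset.mul_sum, Finset.sum_eq_single k
            (fun m _ hm => aeval_lagPoly_mul_aeval_lagPoly_of_ne hx (Ne.symm hm)) (by simp)]
      _ = _ := by rw [sum_aeval_lagPoly hu hx, mul_one]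
  · exact aeval_lagPoly_mul_aeval_lagPoly_of_ne hx hkl

end LagrangeIdempotents

section Relations

variable {n r : ℕ} {u : Fin r → ℂ} {q : ℂ}

lemma aeval_Xi_prod_X_sub_C (j : Fin n) :
    aeval (Xi n r u q j) (∏ l : Fin r, (X - C (u l))) = 0 := by
  rw [Xi, aeval_algHom_apply, RingQuot.mkAlgHom_rel ℂ (Rel.xPoly j), map_zero]

lemma commute_Xi_Xi (j j' : Fin n) : Commute (Xi n r u q j) (Xi n r u q j') := by
  have h := RingQuot.mkAlgHom_rel ℂ (Rel.commXX (r := r) (u := u) (q := q) j j')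
  rwa [map_mul, map_mul] at h

lemma commute_Ti_Xi (i : Fin (n - 1)) {j : Fin n} (h₀ : j ≠ idx0 n i) (h₁ : j ≠ idx1 n i) :
    Commute (Ti n r u q i) (Xi n r u q j) := by
  have h := RingQuot.mkAlgHom_rel ℂ (Rel.commTX (r := r) (u := u) (q := q) i j h₀ h₁)
  rwa [map_mul, map_mul] at h

lemma commute_aeval_Xi (j j' : Fin n) (p p' : ℂ[X]) :
    Commute (aeval (Xi n r u q j) p) (aeval (Xi n r u q j') p') :=
  ((commute_Xi_Xi j' j).aeval_right p).symm.aeval_right p'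

def pairIdem (i : Fin (n - 1)) (a b : Fin r) : AKSAlg n r u q :=
  aeval (Xi n r u q (idx0 n i)) (lagPoly r u a) * aeval (Xi n r u q (idx1 n i)) (lagPoly r u b)

def crossTerm (i : Fin (n - 1)) : AKSAlg n r u q :=
  ∑ p ∈ Finset.univ.filter (fun p : Fin r × Fin r => p.1 < p.2),
    (u p.2 - u p.1) • pairIdem i p.1 p.2

lemma Ti_mul_Xi_idx0 (i : Fin (n - 1)) :
    Ti n r u q i * Xi n r u q (idx0 n i) =
      Xi n r u q (idx1 n i) * Ti n r u q i - (q - 1) • crossTerm i := by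
  have h := RingQuot.mkAlgHom_rel ℂ (Rel.cross (r := r) (u := u) (q := q) i)
  simp only [map_mul, map_sub, map_smul, map_sum, ← aeval_algHom_apply] at h
  exact h

lemma Ti_mul_Xi_idx1 (i : Fin (n - 1)) :
    Ti n r u q i * Xi n r u q (idx1 n i) =
      Xi n r u q (idx0 n i) * Ti n r u q i + (q - 1) • crossTerm i := by
  have h := RingQuot.mkAlgHom_rel ℂ (Rel.sumComm (r := r) (u := u) (q := q) i)
  simp only [map_mul, map_add] at h
  change Ti n r u q i * (Xi n r u q (idx1 n i) + Xi n r u q (idx0 n i)) =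
    (Xi n r u q (idx1 n i) + Xi n r u q (idx0 n i)) * Ti n r u q i at h
  rw [mul_add, add_mul, Ti_mul_Xi_idx0] at h
  rw [← add_left_inj (Xi n r u q (idx1 n i) * Ti n r u q i - (q - 1) • crossTerm i), h]
  abel

end Relations

section PairIdempotents

variable {n r : ℕ} {u : Fin r → ℂ} {q : ℂ}

lemma commute_Xi_pairIdem (i : Fin (n - 1)) (j : Fin n) (a b : Fin r) :
    Commute (Xi n r u q j) (pairIdem i a b) :=
  ((commute_Xi_Xi j _).aeval_right _).mul_right ((commute_Xi_Xi j _).aeval_right _)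

lemma Xi_idx0_mul_pairIdem (i : Fin (n - 1)) (a b : Fin r) :
    Xi n r u q (idx0 n i) * pairIdem i a b = u a • pairIdem i a b := by
  rw [pairIdem, ← mul_assoc, mul_aeval_lagPoly (aeval_Xi_prod_X_sub_C _), smul_mul_assoc]

lemma Xi_idx1_mul_pairIdem (i : Fin (n - 1)) (a b : Fin r) :
    Xi n r u q (idx1 n i) * pairIdem i a b = u b • pairIdem i a b := by
  rw [pairIdem, ← mul_assoc, (((commute_Xi_Xi _ _).aeval_right _).eq), mul_assoc,
    mul_aeval_lagPoly (aeval_Xi_prod_X_sub_C _), mul_smul_comm]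

lemma pairIdem_mul_pairIdem (hu : Function.Injective u) (i : Fin (n - 1)) (a b c d : Fin r) :
    (pairIdem i c d : AKSAlg n r u q) * pairIdem i a b =
      if (c, d) = (a, b) then pairIdem i a b else 0 := by
  rw [pairIdem, pairIdem, (commute_aeval_Xi _ _ _ _).mul_mul_mul_comm,
    aeval_lagPoly_mul_aeval_lagPoly hu (aeval_Xi_prod_X_sub_C _),
    aeval_lagPoly_mul_aeval_lagPoly hu (aeval_Xi_prod_X_sub_C _)]
  split_ifs <;> simp_all

lemma sum_pairIdem (hu : Function.Injective u) (i : Fin (n - 1)) :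
    ∑ p : Fin r × Fin r, (pairIdem i p.1 p.2 : AKSAlg n r u q) = 1 := by
  rw [Fintype.sum_prod_type]
  simp only [pairIdem]
  rw [← Finset.sum_mul_sum, sum_aeval_lagPoly hu (aeval_Xi_prod_X_sub_C _),
    sum_aeval_lagPoly hu (aeval_Xi_prod_X_sub_C _), one_mul]

lemma crossTerm_mul_pairIdem (hu : Function.Injective u) (i : Fin (n - 1)) (a b : Fin r) :
    (crossTerm i : AKSAlg n r u q) * pairIdem i a b =
      (if a < b then u b - u a else 0) • pairIdem i a b := by
  simp [crossTerm, Finset.sum_mul, pairIdem_mul_pairIdem hu, smul_ite, Finset.sum_ite_eq',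
    ite_smul]

end PairIdempotents

section Sandwich

variable {n r : ℕ} {u : Fin r → ℂ} {q : ℂ}

lemma sub_smul_pairIdem_mul_Ti_mul_pairIdem_idx0 (hu : Function.Injective u) (i : Fin (n - 1))
    (a b c d : Fin r) :
    (u d - u a) • (pairIdem i c d * Ti n r u q i * pairIdem i a b) =
      ((q - 1) * if a < b then u b - u a else 0) • (pairIdem i c d * pairIdem i a b) := by
  set D := pairIdem i c d * Ti n r u q i * pairIdem i a b
  have h : u a • D = u d • D -
      ((q - 1) * if a < b then u b - u a else 0) • (pairIdem i c d * pairIdem i a b) :=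
    calc u a • D = pairIdem i c d * (Ti n r u q i * Xi n r u q (idx0 n i)) * pairIdem i a b := by
          simp only [D, mul_assoc, Xi_idx0_mul_pairIdem, mul_smul_comm]
      _ = Xi n r u q (idx1 n i) * pairIdem i c d * Ti n r u q i * pairIdem i a b -
            (q - 1) • (pairIdem i c d * (crossTerm i * pairIdem i a b)) := by
          rw [Ti_mul_Xi_idx0, (commute_Xi_pairIdem _ _ _ _).eq]
          simp only [mul_sub, sub_mul, mul_assoc, mul_smul_comm, smul_mul_assoc]
      _ = _ := by
          rw [Xi_idx1_mul_pairIdem, crossTerm_mul_pairIdem hu, mul_smul_comm, smul_smul,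
            smul_mul_assoc, smul_mul_assoc]
  calc (u d - u a) • D = u d • D - u a • D := sub_smul (u d) (u a) D
    _ = _ := by rw [h, sub_sub_cancel]

lemma sub_smul_pairIdem_mul_Ti_mul_pairIdem_idx1 (hu : Function.Injective u) (i : Fin (n - 1))
    (a b c d : Fin r) :
    (u b - u c) • (pairIdem i c d * Ti n r u q i * pairIdem i a b) =
      ((q - 1) * if a < b then u b - u a else 0) • (pairIdem i c d * pairIdem i a b) := by
  set D := pairIdem i c d * Ti n r u q i * pairIdem i a b
  have h : u b • D = u c • D +
      ((q - 1) * if a < b then u b - u a else 0) • (pairIdem i c d * pairIdem i a b) :=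
    calc u b • D = pairIdem i c d * (Ti n r u q i * Xi n r u q (idx1 n i)) * pairIdem i a b := by
          simp only [D, mul_assoc, Xi_idx1_mul_pairIdem, mul_smul_comm]
      _ = Xi n r u q (idx0 n i) * pairIdem i c d * Ti n r u q i * pairIdem i a b +
            (q - 1) • (pairIdem i c d * (crossTerm i * pairIdem i a b)) := by
          rw [Ti_mul_Xi_idx1, (commute_Xi_pairIdem _ _ _ _).eq]
          simp only [mul_add, add_mul, mul_assoc, mul_smul_comm, smul_mul_assoc]
      _ = _ := by
          rw [Xi_idx0_mul_pairIdem, crossTerm_mul_pairIdem hu, mul_smul_comm, smul_smul,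
            smul_mul_assoc, smul_mul_assoc]
  calc (u b - u c) • D = u b • D - u c • D := sub_smul (u b) (u c) D
    _ = _ := by rw [h, add_sub_cancel_left]

lemma pairIdem_mul_Ti_mul_pairIdem_eq_zero (hu : Function.Injective u) (i : Fin (n - 1))
    {a b c d : Fin r} (hab : (c, d) ≠ (a, b)) (hba : (c, d) ≠ (b, a)) :
    pairIdem i c d * Ti n r u q i * pairIdem i a b = 0 := by
  have hE : (pairIdem i c d : AKSAlg n r u q) * pairIdem i a b = 0 := by
    rw [pairIdem_mul_pairIdem hu, if_neg hab]
  by_cases hda : d = a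
  · have hcb : c ≠ b := fun hcb => hba (by rw [hcb, hda])
    have h := sub_smul_pairIdem_mul_Ti_mul_pairIdem_idx1 (q := q) hu i a b c d
    rw [hE, smul_zero] at h
    exact (smul_eq_zero.mp h).resolve_left (sub_ne_zero.mpr (hu.ne (Ne.symm hcb)))
  · have h := sub_smul_pairIdem_mul_Ti_mul_pairIdem_idx0 (q := q) hu i a b c d
    rw [hE, smul_zero] at h
    exact (smul_eq_zero.mp h).resolve_left (sub_ne_zero.mpr (hu.ne hda))

lemma pairIdem_mul_Ti_mul_pairIdem_self (hu : Function.Injective u) (i : Fin (n - 1)) {a b : Fin r}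
    (hab : a ≠ b) :
    pairIdem i a b * Ti n r u q i * pairIdem i a b =
      (if a < b then q - 1 else 0) • pairIdem i a b := by
  have h := sub_smul_pairIdem_mul_Ti_mul_pairIdem_idx0 (q := q) hu i a b a b
  rw [pairIdem_mul_pairIdem hu, if_pos rfl] at h
  refine smul_right_injective _ (sub_ne_zero.mpr (hu.ne (Ne.symm hab))) (h.trans ?_)
  simp only [smul_smul]
  congr 1
  split_ifs <;> ring

lemma Ti_mul_pairIdem (hu : Function.Injective u) (i : Fin (n - 1)) (a b : Fin r) :
    Ti n r u q i * pairIdem i a b = pairIdem i b a * Ti n r u q i +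
      (q - 1) • ((if a < b then pairIdem i a b else 0) -
        if b < a then pairIdem i b a else 0) := by
  have expand_left : Ti n r u q i * pairIdem i a b =
      ∑ p : Fin r × Fin r, pairIdem i p.1 p.2 * Ti n r u q i * pairIdem i a b := by
    rw [← Finset.sum_mul, ← Finset.sum_mul, sum_pairIdem hu, one_mul]
  have expand_right : pairIdem i b a * Ti n r u q i =
      ∑ p : Fin r × Fin r, pairIdem i b a * Ti n r u q i * pairIdem i p.1 p.2 := by
    rw [← Finset.mul_sum, sum_pairIdem hu, mul_one]
  rw [expand_left, expand_right]
  rcases eq_or_ne a b with rfl | hab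
  · rw [Fintype.sum_eq_single (a, a) fun p hp =>
        pairIdem_mul_Ti_mul_pairIdem_eq_zero hu i (by grind) (by grind),
      Fintype.sum_eq_single (a, a) fun p hp =>
        pairIdem_mul_Ti_mul_pairIdem_eq_zero hu i (by grind) (by grind)]
    simp
  · rw [Fintype.sum_eq_add (b, a) (a, b) (by grind) fun p hp =>
        pairIdem_mul_Ti_mul_pairIdem_eq_zero hu i (by grind) (by grind),
      Fintype.sum_eq_add (a, b) (b, a) (by grind) fun p hp =>
        pairIdem_mul_Ti_mul_pairIdem_eq_zero hu i (by grind) (by grind),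
      pairIdem_mul_Ti_mul_pairIdem_self hu i hab, pairIdem_mul_Ti_mul_pairIdem_self hu i hab.symm]
    rcases hab.lt_or_gt with h | h <;> simp [h, h.not_gt]

end Sandwich

section WordProduct

variable {n r : ℕ} {u : Fin r → ℂ} {q : ℂ}

lemma idx0_ne_idx1 (i : Fin (n - 1)) : idx0 n i ≠ idx1 n i := by
  simp [idx0, idx1, Fin.ext_iff]

lemma pairwise_commute_aeval_Xi (s : Finset (Fin n)) (c : Fin n → Fin r) :
    (s : Set (Fin n)).Pairwise
      (Function.onFun Commute fun j => aeval (Xi n r u q j) (lagPoly r u (c j))) :=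
  fun _ _ _ _ _ => commute_aeval_Xi _ _ _ _

lemma noncommProd_univ_eq_Lc (c : Fin n → Fin r) :
    Finset.univ.noncommProd (fun j => aeval (Xi n r u q j) (lagPoly r u (c j)))
      (pairwise_commute_aeval_Xi _ c) = Lc n r u q c := by
  rw [Finset.noncommProd]
  simp only [Fin.univ_val_map]
  rw [Multiset.noncommProd_coe, Lc]

def restProd (i : Fin (n - 1)) (c : Fin n → Fin r) : AKSAlg n r u q :=
  ((Finset.univ.erase (idx0 n i)).erase (idx1 n i)).noncommProd
    (fun j => aeval (Xi n r u q j) (lagPoly r u (c j))) (pairwise_commute_aeval_Xi _ c)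

lemma Lc_eq_pairIdem_mul_restProd (i : Fin (n - 1)) (c : Fin n → Fin r) :
    Lc n r u q c = pairIdem i (c (idx0 n i)) (c (idx1 n i)) * restProd i c := by
  have hi₁ : idx1 n i ∈ Finset.univ.erase (idx0 n i) :=
    Finset.mem_erase.2 ⟨(idx0_ne_idx1 i).symm, Finset.mem_univ _⟩
  rw [pairIdem, mul_assoc, restProd, ← noncommProd_univ_eq_Lc,
    Finset.mul_noncommProd_erase _ hi₁ _ (pairwise_commute_aeval_Xi _ c),
    Finset.mul_noncommProd_erase _ (Finset.mem_univ _) _ (pairwise_commute_aeval_Xi _ c)]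

lemma commute_Ti_restProd (i : Fin (n - 1)) (c : Fin n → Fin r) :
    Commute (Ti n r u q i) (restProd i c) := by
  refine Finset.noncommProd_commute _ _ _ _ fun j hj => ?_
  obtain ⟨h₁, hj⟩ := Finset.mem_erase.1 hj
  exact (commute_Ti_Xi i (Finset.mem_erase.1 hj).1 h₁).aeval_right _

lemma restProd_swapWord (i : Fin (n - 1)) (c : Fin n → Fin r) :
    (restProd i (swapWord n r c i) : AKSAlg n r u q) = restProd i c := by
  refine Finset.noncommProd_congr rfl (fun j hj => ?_) _
  obtain ⟨h₁, hj⟩ := Finset.mem_erase.1 hj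
  rw [swapWord, Function.comp_apply, Equiv.swap_apply_of_ne_of_ne (Finset.mem_erase.1 hj).1 h₁]

lemma swapWord_idx0 (c : Fin n → Fin r) (i : Fin (n - 1)) :
    swapWord n r c i (idx0 n i) = c (idx1 n i) := by
  simp [swapWord]

lemma swapWord_idx1 (c : Fin n → Fin r) (i : Fin (n - 1)) :
    swapWord n r c i (idx1 n i) = c (idx0 n i) := by
  simp [swapWord]

lemma swapWord_eq_self (c : Fin n → Fin r) {i : Fin (n - 1)} (h : c (idx0 n i) = c (idx1 n i)) :
    swapWord n r c i = c := by
  rw [swapWord, Equiv.comp_swap_eq_update, h, Function.update_eq_self, ← h,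
    Function.update_eq_self]

lemma Ti_mul_Lc (hu : Function.Injective u) (i : Fin (n - 1)) (c : Fin n → Fin r) :
    Ti n r u q i * Lc n r u q c = Lc n r u q (swapWord n r c i) * Ti n r u q i +
      (q - 1) • ((if c (idx0 n i) < c (idx1 n i) then Lc n r u q c else 0) -
        if c (idx1 n i) < c (idx0 n i) then Lc n r u q (swapWord n r c i) else 0) := by
  rw [Lc_eq_pairIdem_mul_restProd i c, Lc_eq_pairIdem_mul_restProd i (swapWord n r c i),
    swapWord_idx0, swapWord_idx1, restProd_swapWord, ← mul_assoc, Ti_mul_pairIdem hu, add_mul,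
    mul_assoc _ (Ti _ _ _ _ _), (commute_Ti_restProd i c).eq, ← mul_assoc, smul_mul_assoc,
    sub_mul, ite_mul, ite_mul, zero_mul]

end WordProduct

theorem Ti_mul_Lc_q_general (n r : ℕ) (u : Fin r → ℂ)
    (hu : Function.Injective u) (q : ℂ) (i : Fin (n - 1)) (c : Fin n → Fin r) :
    (c (idx0 n i) < c (idx1 n i) →
      Ti n r u q i * Lc n r u q c =
        Lc n r u q (swapWord n r c i) * Ti n r u q i + (q - 1) • Lc n r u q c) ∧
    (c (idx0 n i) = c (idx1 n i) →
      Ti n r u q i * Lc n r u q c = Lc n r u q c * Ti n r u q i) ∧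
    (c (idx1 n i) < c (idx0 n i) →
      Ti n r u q i * Lc n r u q c =
        Lc n r u q (swapWord n r c i) * Ti n r u q i -
          (q - 1) • Lc n r u q (swapWord n r c i)) := by
  refine ⟨fun h => ?_, fun h => ?_, fun h => ?_⟩ <;> rw [Ti_mul_Lc hu]
  · simp [h, h.not_gt]
  · simp [h, swapWord_eq_self c h]
  · simp [h, h.not_gt, sub_eq_add_neg]

/-- in `H_{n,r}(q)`,
`T_i L_c = L_{cσ_i} T_i + (q−1) L_c` if `c_i < c_{i+1}`,
`T_i L_c = L_c T_i` if `c_i = c_{i+1}`, and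
`T_i L_c = L_{cσ_i} T_i − (q−1) L_{cσ_i}` if `c_i > c_{i+1}`. -/
theorem Ti_mul_Lc_q (n r : ℕ) (hn : 1 ≤ n) (hr : 1 ≤ r) (u : Fin r → ℂ)
    (hu : Function.Injective u) (q : ℂ) (i : Fin (n - 1)) (c : Fin n → Fin r) :
    (c (idx0 n i) < c (idx1 n i) →
      Ti n r u q i * Lc n r u q c =
        Lc n r u q (swapWord n r c i) * Ti n r u q i + (q - 1) • Lc n r u q c) ∧
    (c (idx0 n i) = c (idx1 n i) →
      Ti n r u q i * Lc n r u q c = Lc n r u q c * Ti n r u q i) ∧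
    (c (idx1 n i) < c (idx0 n i) →
      Ti n r u q i * Lc n r u q c =
        Lc n r u q (swapWord n r c i) * Ti n r u q i -
          (q - 1) • Lc n r u q (swapWord n r c i)) :=
  Ti_mul_Lc_q_general n r u hu q i c

end AKS0
end
end

section
/- The map sending a cycloribbon (c,D) of size n to the ℂ-algebra homomorphism χ_{(c,D)} : H_{n,r}(0) → ℂ determined by χ_{(c,D)}(ξ_j) = u_{c_j} for all 1 ≤ j ≤ n and χ_{(c,D)}(T_i) = −1 if i belongs to the descent set D′ of φ(c,D) and χ_{(c,D)}(T_i) = 0 otherwise, is a well-defined bijection from the set of cycloribbons of size n with colors in {1,…,r} onto the set of all ℂ-algebra homomorphisms H_{n,r}(0) → ℂ. -/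
noncomputable section

open Polynomial

namespace AKS0

/-- A colored ribbon of size `n` with colors in `{1,…,r}`: a color word together with the
descent set of the underlying composition. -/
abbrev ColoredRibbon (n r : ℕ) : Type := (Fin n → Fin r) × Finset (Fin (n - 1))

/-- Cycloribbon: weakly increasing in rows, weakly decreasing in columns. -/
def IsCycloribbon (n r : ℕ) (p : ColoredRibbon n r) : Prop :=
  ∀ i : Fin (n - 1),
    (i ∉ p.2 → p.1 (idx0 n i) ≤ p.1 (idx1 n i)) ∧
    (i ∈ p.2 → p.1 (idx1 n i) ≤ p.1 (idx0 n i))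

/-- The involution `φ`: keep the colors, and take the symmetric difference of the descent
set with the set of positions where the color changes. -/
def phi (n r : ℕ) (p : ColoredRibbon n r) : ColoredRibbon n r :=
  (p.1, symmDiff p.2 (Finset.univ.filter fun i : Fin (n - 1) => p.1 (idx0 n i) ≠ p.1 (idx1 n i)))

/-- `χ` is the character attached to the cycloribbon `p`: `χ(ξ_j) = u_{c_j}` and
`χ(T_i) = −1` if `i` is a descent of `φ(p)`, `χ(T_i) = 0` otherwise. -/
def CharSpec (n r : ℕ) (u : Fin r → ℂ) (p : ColoredRibbon n r)
    (χ : AKSAlg n r u 0 →ₐ[ℂ] ℂ) : Prop :=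
  (∀ j, χ (Xi n r u 0 j) = u (p.1 j)) ∧
    ∀ i : Fin (n - 1), χ (Ti n r u 0 i) = if i ∈ (phi n r p).2 then -1 else 0

/-! Since `ℂ` is commutative, a character of `H_{n,r}(0)` is an assignment of scalars to the
generators satisfying the relations evaluated in `ℂ`. The quadratic and polynomial relations
force `χ(T_i) ∈ {0, -1}` and `χ(ξ_j) = u_{c_j}`; the commutation relations are then automatic,
and so is the braid relation, as `t² = -t` for `t ∈ {0, -1}`. Evaluating the Lagrange
polynomials turns the cross relation into `χ(T_i) (u_{c_i} - u_{c_{i+1}}) = u_{c_{i+1}} - u_{c_i}`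
if `c_i < c_{i+1}` and `= 0` otherwise, so `χ(T_i) = -1` at the strict ascents of `c`,
`χ(T_i) = 0` at its strict descents, and `χ(T_i)` is free where the color does not change. The
sets `{i | χ(T_i) = -1}` obeying these constraints are exactly the descent sets of `φ(c,D)` for
cycloribbons `(c,D)`, and `φ` is an involution. -/

end AKS0

theorem AlgHom.map_aeval_eq_eval {R A : Type*} [CommSemiring R] [Semiring A] [Algebra R A]
    (f : A →ₐ[R] R) (x : A) (P : R[X]) : f (aeval x P) = P.eval (f x) := by
  rw [← aeval_algHom_apply, coe_aeval_eq_eval]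

namespace AKS0

variable {n r : ℕ} {u : Fin r → ℂ}

theorem lagPoly_eq_basis (k : Fin r) : lagPoly r u k = Lagrange.basis Finset.univ u k := rfl

theorem eval_lagPoly (hu : Function.Injective u) (a k : Fin r) :
    (lagPoly r u a).eval (u k) = if a = k then 1 else 0 := by
  rw [lagPoly_eq_basis]
  split_ifs with h
  · subst h
    exact Lagrange.eval_basis_self hu.injOn (Finset.mem_univ a)
  · exact Lagrange.eval_basis_of_ne h (Finset.mem_univ k)

theorem sum_lagPoly_eval_mul_eval (hu : Function.Injective u) (a b : Fin r) :
    ∑ p ∈ Finset.univ.filter (fun p : Fin r × Fin r => p.1 < p.2),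
      (u p.2 - u p.1) • ((lagPoly r u p.1).eval (u a) * (lagPoly r u p.2).eval (u b))
      = if a < b then u b - u a else 0 := by
  rw [Finset.sum_filter, Finset.sum_eq_single (a, b)]
  · simp [eval_lagPoly hu]
  · rintro ⟨x, y⟩ - hne
    simp only [eval_lagPoly hu]
    aesop
  · simp

theorem map_cross_iff (hu : Function.Injective u) (f : FreeAKS n →ₐ[ℂ] ℂ) (i : Fin (n - 1))
    {a b : Fin r} (ha : f (xGen n (idx0 n i)) = u a) (hb : f (xGen n (idx1 n i)) = u b) :
    f (tGen n i * xGen n (idx0 n i)) =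
        f (xGen n (idx1 n i) * tGen n i -
          (0 - 1 : ℂ) • ∑ p ∈ Finset.univ.filter (fun p : Fin r × Fin r => p.1 < p.2),
            (u p.2 - u p.1) •
              (aeval (xGen n (idx0 n i)) (lagPoly r u p.1) *
                aeval (xGen n (idx1 n i)) (lagPoly r u p.2))) ↔
      (a < b → f (tGen n i) = -1) ∧ (b < a → f (tGen n i) = 0) := by
  simp only [map_mul, map_sub, map_smul, map_sum, AlgHom.map_aeval_eq_eval, ha, hb]
  rw [sum_lagPoly_eval_mul_eval hu, smul_eq_mul]
  rcases lt_trichotomy a b with h | rfl | h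
  · have hab : u a - u b ≠ 0 := sub_ne_zero.2 (hu.ne h.ne)
    simp only [h, if_true, h.not_gt, false_imp_iff, and_true, forall_const]
    exact ⟨fun e => mul_right_cancel₀ hab (by linear_combination e), fun e => by rw [e]; ring⟩
  · simp only [lt_irrefl, if_false, false_imp_iff, and_self, iff_true]
    ring
  · have hab : u a - u b ≠ 0 := sub_ne_zero.2 (hu.ne h.ne')
    simp only [h, h.not_gt, if_false, false_imp_iff, true_and, forall_const]
    exact ⟨fun e => mul_right_cancel₀ hab (by linear_combination e), fun e => by rw [e]; ring⟩

variable (n r) in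
/-- The sets that occur as `{i | χ(T_i) = -1}` for characters `χ` with `χ(ξ_j) = u_{c_j}`. -/
def IsAdmissible (p : ColoredRibbon n r) : Prop :=
  ∀ i : Fin (n - 1), (p.1 (idx0 n i) < p.1 (idx1 n i) → i ∈ p.2) ∧
    (p.1 (idx1 n i) < p.1 (idx0 n i) → i ∉ p.2)

theorem phi_involutive : Function.Involutive (phi n r) := fun _ =>
  Prod.ext rfl (symmDiff_symmDiff_cancel_right _ _)

theorem isCycloribbon_iff_isAdmissible_phi (p : ColoredRibbon n r) :
    IsCycloribbon n r p ↔ IsAdmissible n r (phi n r p) := by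
  refine forall_congr' fun i => ?_
  simp only [phi, Finset.mem_symmDiff, Finset.mem_filter, Finset.mem_univ, true_and]
  rcases lt_trichotomy (p.1 (idx0 n i)) (p.1 (idx1 n i)) with h | h | h
  · simp [h, h.ne, h.not_gt, h.not_ge, h.le]
  · simp [h]
  · simp [h, h.ne', h.not_gt, h.not_ge, h.le]

theorem respects_rel_iff_isAdmissible (hu : Function.Injective u) (f : FreeAKS n →ₐ[ℂ] ℂ)
    (q : ColoredRibbon n r) (hx : ∀ j, f (xGen n j) = u (q.1 j))
    (ht : ∀ i, f (tGen n i) = if i ∈ q.2 then -1 else 0) :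
    (∀ x y, Rel n r u 0 x y → f x = f y) ↔ IsAdmissible n r q := by
  refine ⟨fun h i => ?_, fun hq x y h => ?_⟩
  · simpa [ht] using (map_cross_iff hu f i (hx _) (hx _)).1 (h _ _ (Rel.cross i))
  induction h with
  | quad i => by_cases hi : i ∈ q.2 <;> simp [ht, hi]
  | xPoly j =>
    rw [AlgHom.map_aeval_eq_eval, hx, eval_prod, map_zero]
    exact Finset.prod_eq_zero (Finset.mem_univ (q.1 j)) (by simp)
  | cross i =>
    refine (map_cross_iff hu f i (hx _) (hx _)).2 ⟨fun h => ?_, fun h => ?_⟩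
    · simp [ht, (hq i).1 h]
    · simp [ht, (hq i).2 h]
  | braid i j => by_cases hi : i ∈ q.2 <;> by_cases hj : j ∈ q.2 <;> simp [ht, hi, hj]
  | commTT | commXX | sumComm | commTX => simp only [map_mul, map_add]; ring

theorem exists_ribbon_of_respects_rel (f : FreeAKS n →ₐ[ℂ] ℂ)
    (hf : ∀ x y, Rel n r u 0 x y → f x = f y) :
    ∃ q : ColoredRibbon n r, (∀ j, f (xGen n j) = u (q.1 j)) ∧
      ∀ i, f (tGen n i) = if i ∈ q.2 then -1 else 0 := by
  have hx : ∀ j, ∃ k, f (xGen n j) = u k := fun j => by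
    have h := hf _ _ (Rel.xPoly j)
    rw [AlgHom.map_aeval_eq_eval, map_zero, eval_prod] at h
    obtain ⟨k, -, hk⟩ := Finset.prod_eq_zero_iff.1 h
    exact ⟨k, sub_eq_zero.1 (by simpa using hk)⟩
  have ht : ∀ i, f (tGen n i) = 0 ∨ f (tGen n i) = -1 := fun i => by
    have h := hf _ _ (Rel.quad i)
    simp only [map_mul, map_sub, map_add, map_one, map_zero] at h
    rcases mul_eq_zero.1 h with h | h
    · exact Or.inl (by simpa using h)
    · exact Or.inr (eq_neg_of_add_eq_zero_left h)
  choose c hc using hx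
  refine ⟨(c, Finset.univ.filter fun i => f (tGen n i) = -1), hc, fun i => ?_⟩
  rcases ht i with h | h <;> simp [h]

theorem algHom_ext {q : ℂ} {A : Type*} [Semiring A] [Algebra ℂ A]
    {χ₁ χ₂ : AKSAlg n r u q →ₐ[ℂ] A} (hT : ∀ i, χ₁ (Ti n r u q i) = χ₂ (Ti n r u q i))
    (hX : ∀ j, χ₁ (Xi n r u q j) = χ₂ (Xi n r u q j)) : χ₁ = χ₂ :=
  RingQuot.ringQuot_ext' ℂ _ _ (FreeAlgebra.hom_ext (funext (Sum.rec hT hX)))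

theorem exists_charSpec (hu : Function.Injective u) {p : ColoredRibbon n r}
    (hp : IsCycloribbon n r p) : ∃ χ : AKSAlg n r u 0 →ₐ[ℂ] ℂ, CharSpec n r u p χ := by
  let f : FreeAKS n →ₐ[ℂ] ℂ := FreeAlgebra.lift ℂ
    (Sum.elim (fun i => if i ∈ (phi n r p).2 then -1 else 0) (fun j => u (p.1 j)))
  have hx : ∀ j, f (xGen n j) = u ((phi n r p).1 j) := fun j => by simp [f, xGen, phi]
  have ht : ∀ i, f (tGen n i) = if i ∈ (phi n r p).2 then -1 else 0 := fun i => by simp [f, tGen]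
  have hf := (respects_rel_iff_isAdmissible hu f _ hx ht).2
    ((isCycloribbon_iff_isAdmissible_phi p).1 hp)
  exact ⟨RingQuot.liftAlgHom ℂ ⟨f, hf⟩,
    fun j => (RingQuot.liftAlgHom_mkAlgHom_apply _ _ _ _).trans (hx j),
    fun i => (RingQuot.liftAlgHom_mkAlgHom_apply _ _ _ _).trans (ht i)⟩

theorem exists_isCycloribbon_charSpec (hu : Function.Injective u)
    (χ : AKSAlg n r u 0 →ₐ[ℂ] ℂ) : ∃ p, IsCycloribbon n r p ∧ CharSpec n r u p χ := by
  let f := χ.comp (RingQuot.mkAlgHom ℂ (Rel n r u 0))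
  have hf : ∀ x y, Rel n r u 0 x y → f x = f y := fun x y h =>
    congrArg χ (RingQuot.mkAlgHom_rel ℂ h)
  obtain ⟨q, hx, ht⟩ := exists_ribbon_of_respects_rel f hf
  have hq := (respects_rel_iff_isAdmissible hu f q hx ht).1 hf
  rw [← phi_involutive q] at ht hq
  exact ⟨phi n r q, (isCycloribbon_iff_isAdmissible_phi _).2 hq, hx, ht⟩

theorem CharSpec.algHom_eq {p : ColoredRibbon n r} {χ₁ χ₂ : AKSAlg n r u 0 →ₐ[ℂ] ℂ}
    (h₁ : CharSpec n r u p χ₁) (h₂ : CharSpec n r u p χ₂) : χ₁ = χ₂ :=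
  algHom_ext (fun i => (h₁.2 i).trans (h₂.2 i).symm) (fun j => (h₁.1 j).trans (h₂.1 j).symm)

theorem CharSpec.ribbon_eq (hu : Function.Injective u) {p p' : ColoredRibbon n r}
    {χ : AKSAlg n r u 0 →ₐ[ℂ] ℂ} (h : CharSpec n r u p χ) (h' : CharSpec n r u p' χ) :
    p = p' := by
  refine phi_involutive.injective (Prod.ext (funext fun j => hu ?_) (Finset.ext fun i => ?_))
  · exact (h.1 j).symm.trans (h'.1 j)
  · have hi := (h.2 i).symm.trans (h'.2 i)
    split_ifs at hi <;> simp_all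

theorem cycloribbon_algHom_bijection_general (n r : ℕ)
    (u : Fin r → ℂ) (hu : Function.Injective u) :
    (∀ p : ColoredRibbon n r, IsCycloribbon n r p →
      ∃! χ : AKSAlg n r u 0 →ₐ[ℂ] ℂ, CharSpec n r u p χ) ∧
    (∀ χ : AKSAlg n r u 0 →ₐ[ℂ] ℂ,
      ∃! p : ColoredRibbon n r, IsCycloribbon n r p ∧ CharSpec n r u p χ) := by
  refine ⟨fun p hp => ?_, fun χ => ?_⟩
  · obtain ⟨χ, hχ⟩ := exists_charSpec hu hp
    exact ⟨χ, hχ, fun _ hχ' => hχ'.algHom_eq hχ⟩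
  · obtain ⟨p, hp, hχ⟩ := exists_isCycloribbon_charSpec hu χ
    exact ⟨p, ⟨hp, hχ⟩, fun _ hp' => hp'.2.ribbon_eq hu hχ⟩

/-- the map sending a cycloribbon `(c,D)` to the character `χ_{(c,D)}` with
`χ(ξ_j) = u_{c_j}` and `χ(T_i) = −1` or `0` according to whether `i` is a descent of
`φ(c,D)` or not, is a well-defined bijection from cycloribbons of size `n` onto the set of
all `ℂ`-algebra homomorphisms `H_{n,r}(0) → ℂ`. -/
theorem cycloribbon_algHom_bijection (n r : ℕ) (hn : 1 ≤ n) (hr : 1 ≤ r)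
    (u : Fin r → ℂ) (hu : Function.Injective u) :
    (∀ p : ColoredRibbon n r, IsCycloribbon n r p →
      ∃! χ : AKSAlg n r u 0 →ₐ[ℂ] ℂ, CharSpec n r u p χ) ∧
    (∀ χ : AKSAlg n r u 0 →ₐ[ℂ] ℂ,
      ∃! p : ColoredRibbon n r, IsCycloribbon n r p ∧ CharSpec n r u p χ) :=
  cycloribbon_algHom_bijection_general n r u hu

end AKS0
end
end
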